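/- Every partial rainbow S on a finite group G is a minimal generating set of the transfer system ⟨S⟩ it generates. -/
import Mathlib


/-- Conjugate of a subgroup: `H^g`. -/
def conjSub {G : Type*} [Group G] (g : G) (H : Subgroup G) : Subgroup G :=
  H.map (MulAut.conj g).toMonoidHom

/-- A `G`-transfer system: a set of pairs `(K, H)` of subgroups with `K ≤ H`, containing all
identity pairs and closed under composition, conjugation, and restriction. -/
def IsTransferSystem {G : Type*} [Group G] (T : Set (Subgroup G × Subgroup G)) : Prop :=
  (∀ p ∈ T, p.1 ≤ p.2) ∧
  (∀ H : Subgroup G, (H, H) ∈ T) ∧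
  (∀ L K H : Subgroup G, (L, K) ∈ T → (K, H) ∈ T → (L, H) ∈ T) ∧
  (∀ K H : Subgroup G, (K, H) ∈ T → ∀ g : G, (conjSub g K, conjSub g H) ∈ T) ∧
  (∀ K H : Subgroup G, (K, H) ∈ T → ∀ L : Subgroup G, L ≤ H → (K ⊓ L, L) ∈ T)

/-- Rubin's closure: the smallest transfer system containing `S`. -/
def tsGen {G : Type*} [Group G] (S : Set (Subgroup G × Subgroup G)) :
    Set (Subgroup G × Subgroup G) :=
  ⋂₀ {T | IsTransferSystem T ∧ S ⊆ T}

/-- `S` is a minimal generating set (of non-identity intervals) for the transfer system `T`. -/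
def IsMinGenSet {G : Type*} [Group G] (S T : Set (Subgroup G × Subgroup G)) : Prop :=
  S ⊆ T ∧ (∀ p ∈ S, p.1 ≠ p.2) ∧ tsGen S = T ∧ ∀ s ∈ S, tsGen (S \ {s}) ⊂ T

/-- Total exponent (number of prime factors with multiplicity) of `n`. -/
def bigOmega (n : ℕ) : ℕ := n.primeFactorsList.length

/-- The image of an interval of subgroups under the total-exponent map `P`. -/
noncomputable def pairP {G : Type*} [Group G] (p : Subgroup G × Subgroup G) : ℕ × ℕ :=
  (bigOmega (Nat.card (↥p.1)), bigOmega (Nat.card (↥p.2)))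

/-- A partial rainbow on `G`: a set of non-identity intervals of subgroups whose image under
`P` is a set of strictly nested arcs, containing at most one pair from each conjugacy class
of pairs of subgroups. -/
def IsPartialRainbow {G : Type*} [Group G] (S : Set (Subgroup G × Subgroup G)) : Prop :=
  (∀ p ∈ S, p.1 < p.2) ∧
  (∀ p ∈ S, ∀ q ∈ S, pairP p ≠ pairP q →
      ((pairP p).1 < (pairP q).1 ∧ (pairP q).2 < (pairP p).2) ∨
      ((pairP q).1 < (pairP p).1 ∧ (pairP p).2 < (pairP q).2)) ∧
  (∀ p ∈ S, ∀ q ∈ S, (∃ g : G, conjSub g p.1 = q.1 ∧ conjSub g p.2 = q.2) → p = q)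

-- auxiliary lemmas

lemma conjSub_one {G : Type*} [Group G] (H : Subgroup G) : conjSub 1 H = H := by
  unfold conjSub
  ext x
  simp

lemma conjSub_conjSub {G : Type*} [Group G] (g h : G) (H : Subgroup G) :
    conjSub g (conjSub h H) = conjSub (g * h) H := by
  unfold conjSub
  rw [Subgroup.map_map]
  congr 1
  ext x
  simp [mul_assoc]

lemma card_conjSub {G : Type*} [Group G] (g : G) (H : Subgroup G) :
    Nat.card (conjSub g H) = Nat.card H :=
  (Nat.card_congr (H.equivMapOfInjective (MulAut.conj g).toMonoidHom
    (MulAut.conj g).injective).toEquiv).symm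

lemma bigOmega_le_of_dvd {d n : ℕ} (h : d ∣ n) (hn : n ≠ 0) : bigOmega d ≤ bigOmega n := by
  obtain ⟨m, rfl⟩ := h
  have hd : d ≠ 0 := by rintro rfl; simp at hn
  have hm : m ≠ 0 := by rintro rfl; simp at hn
  have := (Nat.perm_primeFactorsList_mul hd hm).length_eq
  unfold bigOmega
  simp only [this, List.length_append]
  omega

lemma eq_of_dvd_of_bigOmega {d n : ℕ} (h : d ∣ n) (hn : n ≠ 0)
    (hΩ : bigOmega d = bigOmega n) : d = n := by
  obtain ⟨m, rfl⟩ := h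
  have hd : d ≠ 0 := by rintro rfl; simp at hn
  have hm : m ≠ 0 := by rintro rfl; simp at hn
  have := (Nat.perm_primeFactorsList_mul hd hm).length_eq
  unfold bigOmega at hΩ
  rw [this, List.length_append] at hΩ
  have : m.primeFactorsList.length = 0 := by omega
  have : m.primeFactorsList = [] := List.length_eq_zero_iff.mp this
  have : m = 0 ∨ m = 1 := (Nat.primeFactorsList_eq_nil m).mp this
  rcases this with h | h
  · exact absurd h hm
  · simp [h]

lemma subgroup_eq_of_le_of_bigOmega {G : Type*} [Group G] [Finite G] {K H : Subgroup G}
    (h : K ≤ H) (hΩ : bigOmega (Nat.card K) = bigOmega (Nat.card H)) : K = H := by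
  have hd : Nat.card K ∣ Nat.card H := Subgroup.card_dvd_of_le h
  have hn : Nat.card H ≠ 0 := Nat.card_pos.ne'
  have := eq_of_dvd_of_bigOmega hd hn hΩ
  exact Subgroup.eq_of_le_of_card_ge h this.ge


/-- Every partial rainbow `S` on a finite group `G` is a minimal generating set of the
transfer system it generates. -/
theorem partialRainbow_isMinGenSet {G : Type*} [Group G] [Finite G]
    (S : Set (Subgroup G × Subgroup G)) (hS : IsPartialRainbow S) :
    IsMinGenSet S (tsGen S) := by
  obtain ⟨h1, h2, h3⟩ := hS
  have hSsub : S ⊆ tsGen S := fun p hp T hT => hT.2 hp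
  refine ⟨hSsub, fun p hp => (h1 p hp).ne, rfl, ?_⟩
  intro s hs
  -- the witnessing transfer system avoiding s
  set T : Set (Subgroup G × Subgroup G) :=
    {p | p.1 ≤ p.2 ∧ (p.1 = p.2 ∨
      ∃ q ∈ S \ {s}, ∃ g : G, p.1 ≤ conjSub g q.1 ∧ p.2 ≤ conjSub g q.2)} with hTdef
  have hTts : IsTransferSystem T := by
    refine ⟨fun p hp => hp.1, fun H => ⟨le_rfl, Or.inl rfl⟩, ?_, ?_, ?_⟩
    · rintro L K H ⟨hLK, hw1⟩ ⟨hKH, hw2⟩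
      refine ⟨hLK.trans hKH, ?_⟩
      rcases hw2 with heq | ⟨q, hq, g, hq1, hq2⟩
      · change K = H at heq; subst heq; exact hw1
      · exact Or.inr ⟨q, hq, g, hLK.trans hq1, hq2⟩
    · rintro K H ⟨hKH, hw⟩ g
      refine ⟨Subgroup.map_mono hKH, ?_⟩
      rcases hw with heq | ⟨q, hq, h, hq1, hq2⟩
      · change K = H at heq; subst heq; exact Or.inl rfl
      · refine Or.inr ⟨q, hq, g * h, ?_, ?_⟩
        · rw [← conjSub_conjSub]; exact Subgroup.map_mono hq1
        · rw [← conjSub_conjSub]; exact Subgroup.map_mono hq2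
    · rintro K H ⟨hKH, hw⟩ L hL
      refine ⟨inf_le_right, ?_⟩
      rcases hw with heq | ⟨q, hq, g, hq1, hq2⟩
      · change K = H at heq; subst heq; exact Or.inl (inf_eq_right.mpr hL)
      · exact Or.inr ⟨q, hq, g, inf_le_left.trans hq1, hL.trans hq2⟩
  have hTcontains : S \ {s} ⊆ T := by
    rintro ⟨q1, q2⟩ hq
    refine ⟨(h1 _ hq.1).le, Or.inr ⟨(q1, q2), hq, 1, ?_, ?_⟩⟩ <;>
      simp [conjSub_one]
  have hsT : s ∉ T := by
    rintro ⟨-, h⟩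
    rcases h with heq | ⟨q, hq, g, hq1, hq2⟩
    · exact (h1 s hs).ne heq
    · -- bigOmega comparisons
      have hΩ1 : bigOmega (Nat.card s.1) ≤ bigOmega (Nat.card q.1) := by
        have := bigOmega_le_of_dvd (Subgroup.card_dvd_of_le hq1)
          (Nat.card_pos (α := (conjSub g q.1)).ne'
          )
        rwa [card_conjSub] at this
      have hΩ2 : bigOmega (Nat.card s.2) ≤ bigOmega (Nat.card q.2) := by
        have := bigOmega_le_of_dvd (Subgroup.card_dvd_of_le hq2)
          (Nat.card_pos (α := (conjSub g q.2)).ne')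
        rwa [card_conjSub] at this
      have hpp : pairP s = pairP q := by
        by_contra hne
        rcases h2 s hs q hq.1 hne with ⟨ha, hb⟩ | ⟨ha, hb⟩
        · exact absurd hΩ2 (not_le.mpr hb)
        · exact absurd hΩ1 (not_le.mpr ha)
      have hpp1 : bigOmega (Nat.card s.1) = bigOmega (Nat.card q.1) :=
        congrArg Prod.fst hpp
      have hpp2 : bigOmega (Nat.card s.2) = bigOmega (Nat.card q.2) :=
        congrArg Prod.snd hpp
      have e1 : s.1 = conjSub g q.1 := by
        apply subgroup_eq_of_le_of_bigOmega hq1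
        rw [card_conjSub]; exact hpp1
      have e2 : s.2 = conjSub g q.2 := by
        apply subgroup_eq_of_le_of_bigOmega hq2
        rw [card_conjSub]; exact hpp2
      exact hq.2 (h3 q hq.1 s hs ⟨g, e1.symm, e2.symm⟩)
  constructor
  · intro p hp
    intro T' hT'
    exact hp T' ⟨hT'.1, (Set.diff_subset).trans hT'.2⟩
  · intro hsup
    have : s ∈ tsGen (S \ {s}) := hsup (hSsub hs)
    exact hsT (this T ⟨hTts, hTcontains⟩)
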